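/- arXiv:2412.07098 — 3 statements merged into one kernel-verified Lean document; each statement's English description precedes it below -/
import Mathlib

section
/- Let M > 1 and 1 < a < 2. Every spin-flip collection S ⊂ ℤ+1/2 admits exactly one (M,a)-partition. -/
noncomputable section
open scoped Classical

/-! An integer `k : ℤ` encodes the dual-lattice site (spin flip) `k + 1/2 ∈ ℤ + 1/2`;
a spin-flip collection is a finite set `γ : Finset ℤ` of even cardinality.  Distances
and diameters of sets of spin flips are computed in `ℝ` (the half-integer offsets
cancel, so they equal the corresponding integer quantities). -/

/-- The diameter of `γ` (as a subset of `ℤ + 1/2`). -/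
def diamZ (γ : Finset ℤ) : ℤ := γ.max.unbotD 0 - γ.min.untopD 0

/-- `γ` is an `(M,a)`-irreducible contour: a nonempty spin-flip collection admitting no
decomposition into at least two nonempty even parts that are pairwise at distance
greater than `M·(min of the diameters)^a`;  `dist(γᵢ,γⱼ) > c` is expressed by
`∀ x ∈ γᵢ, ∀ y ∈ γⱼ, c < |x − y|`. -/
def IsContour (M a : ℝ) (γ : Finset ℤ) : Prop :=
  γ.Nonempty ∧ Even γ.card ∧
    ¬∃ P : Finset (Finset ℤ), 2 ≤ P.card ∧ (∀ g ∈ P, g.Nonempty ∧ Even g.card) ∧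
      (P : Set (Finset ℤ)).PairwiseDisjoint id ∧ P.sup id = γ ∧
      ∀ g ∈ P, ∀ g' ∈ P, g ≠ g' → ∀ x ∈ g, ∀ y ∈ g',
        M * ((min (diamZ g) (diamZ g') : ℤ) : ℝ) ^ a < |(x : ℝ) - (y : ℝ)|

/-- `Γ` is an `(M,a)`-partition of `S`: a finite family of pairwise disjoint
`(M,a)`-irreducible contours with union `S`, any two distinct members being at distance
greater than `M·(min of the diameters)^a`. -/
def IsPartition (M a : ℝ) (S : Finset ℤ) (Γ : Finset (Finset ℤ)) : Prop :=
  (∀ g ∈ Γ, IsContour M a g) ∧ (Γ : Set (Finset ℤ)).PairwiseDisjoint id ∧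
    Γ.sup id = S ∧
    ∀ g ∈ Γ, ∀ g' ∈ Γ, g ≠ g' → ∀ x ∈ g, ∀ y ∈ g',
      M * ((min (diamZ g) (diamZ g') : ℤ) : ℝ) ^ a < |(x : ℝ) - (y : ℝ)|

/-! Existence is by strong induction on `S`: a collection that is not a contour splits into
at least two even, mutually separated parts, partitions of the parts combine into one of `S`,
and separation passes to subsets.

Uniqueness: each contour `γ` of a partition lies inside a contour of any other partition `Γ'`,
by induction on `diam γ`. The members of `Γ'` meeting `γ` with smaller diameter lie in `γ` by
the induction hypothesis applied with the roles of the partitions swapped. At most one member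
meeting `γ` has diameter `≥ diam γ`, since `M d^a ≥ d` for `d ≥ 1` keeps two such members
farther apart than `diam γ`. So the traces of `Γ'` on `γ` are even (the exceptional one by
parity) and mutually separated, and irreducibility of `γ` leaves a single one. -/

open Finset

section Diameter

variable {γ c : Finset ℤ}

lemma diamZ_eq_max'_sub_min' (h : γ.Nonempty) : diamZ γ = γ.max' h - γ.min' h := by
  rw [diamZ, ← coe_max' h, ← coe_min' h]
  rfl

lemma diamZ_nonneg (γ : Finset ℤ) : 0 ≤ diamZ γ := by
  rcases γ.eq_empty_or_nonempty with rfl | h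
  · rfl
  · rw [diamZ_eq_max'_sub_min' h]
    linarith [γ.min'_le_max' h]

lemma abs_sub_le_diamZ {x y : ℤ} (hx : x ∈ γ) (hy : y ∈ γ) : |x - y| ≤ diamZ γ := by
  rw [diamZ_eq_max'_sub_min' ⟨x, hx⟩, abs_le]
  have := γ.min'_le x hx
  have := γ.le_max' x hx
  have := γ.min'_le y hy
  have := γ.le_max' y hy
  constructor <;> linarith

lemma diamZ_mono (hc : c.Nonempty) (hcγ : c ⊆ γ) : diamZ c ≤ diamZ γ := by
  rw [diamZ_eq_max'_sub_min' hc, diamZ_eq_max'_sub_min' (hc.mono hcγ)]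
  linarith [min'_subset hc hcγ, max'_subset hc hcγ]

lemma one_le_diamZ_of_one_lt_card (h : 1 < γ.card) : 1 ≤ diamZ γ := by
  rw [diamZ_eq_max'_sub_min' (card_pos.mp (by omega))]
  linarith [γ.min'_lt_max'_of_card h]

end Diameter

def Separated (M a : ℝ) (g g' : Finset ℤ) : Prop :=
  ∀ x ∈ g, ∀ y ∈ g',
    M * ((min (diamZ g) (diamZ g') : ℤ) : ℝ) ^ a < |(x : ℝ) - (y : ℝ)|

namespace Separated

variable {M a : ℝ} {g g' c c' : Finset ℤ}

lemma mono (hM : 0 ≤ M) (ha : 0 ≤ a) (h : Separated M a g g') (hc : c ⊆ g) (hc' : c' ⊆ g') :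
    Separated M a c c' := by
  intro x hx y hy
  refine lt_of_le_of_lt ?_ (h x (hc hx) y (hc' hy))
  have hmin : min (diamZ c) (diamZ c') ≤ min (diamZ g) (diamZ g') :=
    min_le_min (diamZ_mono ⟨x, hx⟩ hc) (diamZ_mono ⟨y, hy⟩ hc')
  gcongr ?_ * ?_ ^ _
  · exact Int.cast_nonneg_iff.mpr (le_min (diamZ_nonneg c) (diamZ_nonneg c'))
  · exact Int.cast_le.mpr hmin

lemma min_diamZ_lt (hM : 1 ≤ M) (ha : 1 ≤ a) (h : Separated M a g g')
    (hg : 1 ≤ diamZ g) (hg' : 1 ≤ diamZ g') {x y : ℤ} (hx : x ∈ g) (hy : y ∈ g') :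
    min (diamZ g) (diamZ g') < |x - y| := by
  have le_mul_rpow : ∀ d : ℝ, 1 ≤ d → d ≤ M * d ^ a := fun d hd =>
    (Real.self_le_rpow_of_one_le hd ha).trans (le_mul_of_one_le_left (by positivity) hM)
  have hd : (1 : ℝ) ≤ ((min (diamZ g) (diamZ g') : ℤ) : ℝ) := by
    exact_mod_cast le_min hg hg'
  have := (le_mul_rpow _ hd).trans_lt (h x hx y hy)
  exact_mod_cast this

end Separated

def IsSplitting (M a : ℝ) (S : Finset ℤ) (P : Finset (Finset ℤ)) : Prop :=
  (P : Set (Finset ℤ)).PairwiseDisjoint id ∧ P.sup id = S ∧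
    (P : Set (Finset ℤ)).Pairwise (Separated M a)

def trace (P : Finset (Finset ℤ)) (γ : Finset ℤ) : Finset (Finset ℤ) :=
  (P.image (· ∩ γ)).filter (·.Nonempty)

lemma mem_trace {P : Finset (Finset ℤ)} {γ q : Finset ℤ} :
    q ∈ trace P γ ↔ ∃ t ∈ P, t ∩ γ = q ∧ q.Nonempty := by
  simp only [trace, mem_filter, mem_image]
  tauto

namespace IsSplitting

variable {M a : ℝ} {S γ g g' : Finset ℤ} {P : Finset (Finset ℤ)}

lemma empty : IsSplitting M a ∅ ∅ := by
  simp [IsSplitting]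

lemma singleton : IsSplitting M a S {S} := by
  simp [IsSplitting]

lemma subset (h : IsSplitting M a S P) (hg : g ∈ P) : g ⊆ S :=
  h.2.1 ▸ le_sup (f := id) hg

lemma exists_mem (h : IsSplitting M a S P) {x : ℤ} (hx : x ∈ S) : ∃ g ∈ P, x ∈ g :=
  mem_sup.mp (h.2.1 ▸ hx)

lemma eq_of_mem (h : IsSplitting M a S P) (hg : g ∈ P) (hg' : g' ∈ P) {x : ℤ} (hx : x ∈ g)
    (hx' : x ∈ g') : g = g' := by
  by_contra hne
  exact disjoint_left.mp (h.1 hg hg' hne) hx hx'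

lemma ssubset (h : IsSplitting M a S P) (hg : g ∈ P) (hg' : g' ∈ P) (hne : g' ≠ g)
    (hg'ne : g'.Nonempty) : g ⊂ S := by
  obtain ⟨x, hx⟩ := hg'ne
  refine (ssubset_iff_of_subset (h.subset hg)).mpr ⟨x, h.subset hg' hx, fun hxg => ?_⟩
  exact hne (h.eq_of_mem hg' hg hx hxg)

lemma card_eq_sum (h : IsSplitting M a S P) : S.card = ∑ g ∈ P, g.card := by
  rw [← h.2.1, sup_eq_biUnion, card_biUnion h.1]
  rfl

lemma even_card_of_forall_ne (h : IsSplitting M a S P) (hS : Even S.card) (hg : g ∈ P)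
    (hP : ∀ g' ∈ P, g' ≠ g → Even g'.card) : Even g.card := by
  have hrest : Even (∑ g' ∈ P.erase g, g'.card) :=
    even_sum _ fun g' hg' => hP g' (mem_of_mem_erase hg') (ne_of_mem_erase hg')
  rw [h.card_eq_sum, ← add_sum_erase P _ hg] at hS
  exact (Nat.even_add.mp hS).mpr hrest

lemma restrict (h : IsSplitting M a S P) (hγ : γ ⊆ S) (hM : 0 ≤ M) (ha : 0 ≤ a) :
    IsSplitting M a γ (trace P γ) := by
  refine ⟨?_, ?_, ?_⟩
  · rintro q hq q' hq' hne
    obtain ⟨t, ht, rfl, -⟩ := mem_trace.mp hq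
    obtain ⟨t', ht', rfl, -⟩ := mem_trace.mp hq'
    have htt' : t ≠ t' := by rintro rfl; exact hne rfl
    exact (h.1 ht ht' htt').mono inter_subset_left inter_subset_left
  · ext x
    simp only [mem_sup, id]
    constructor
    · rintro ⟨q, hq, hxq⟩
      obtain ⟨t, -, rfl, -⟩ := mem_trace.mp hq
      exact (mem_inter.mp hxq).2
    · intro hx
      obtain ⟨t, ht, hxt⟩ := h.exists_mem (hγ hx)
      have hxtγ : x ∈ t ∩ γ := mem_inter.mpr ⟨hxt, hx⟩
      exact ⟨t ∩ γ, mem_trace.mpr ⟨t, ht, rfl, x, hxtγ⟩, hxtγ⟩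
  · rintro q hq q' hq' hne
    obtain ⟨t, ht, rfl, -⟩ := mem_trace.mp hq
    obtain ⟨t', ht', rfl, -⟩ := mem_trace.mp hq'
    have htt' : t ≠ t' := by rintro rfl; exact hne rfl
    exact (h.2.2 ht ht' htt').mono hM ha inter_subset_left inter_subset_left

lemma biUnion (h : IsSplitting M a S P) {Γ : Finset ℤ → Finset (Finset ℤ)}
    (hΓ : ∀ g ∈ P, IsSplitting M a g (Γ g)) (hM : 0 ≤ M) (ha : 0 ≤ a) :
    IsSplitting M a S (P.biUnion Γ) := by
  have mem_parts : ∀ c ∈ P.biUnion Γ, ∃ g ∈ P, c ∈ Γ g ∧ c ⊆ g := by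
    intro c hc
    obtain ⟨g, hg, hcg⟩ := mem_biUnion.mp hc
    exact ⟨g, hg, hcg, (hΓ g hg).subset hcg⟩
  refine ⟨?_, ?_, ?_⟩
  · rintro c hc c' hc' hne
    obtain ⟨g, hg, hcg, hcsub⟩ := mem_parts c hc
    obtain ⟨g', hg', hcg', hcsub'⟩ := mem_parts c' hc'
    by_cases hgg' : g = g'
    · subst hgg'
      exact (hΓ g hg).1 hcg hcg' hne
    · exact (h.1 hg hg' hgg').mono hcsub hcsub'
  · rw [sup_biUnion, ← h.2.1]
    exact sup_congr rfl fun g hg => (hΓ g hg).2.1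
  · rintro c hc c' hc' hne
    obtain ⟨g, hg, hcg, hcsub⟩ := mem_parts c hc
    obtain ⟨g', hg', hcg', hcsub'⟩ := mem_parts c' hc'
    by_cases hgg' : g = g'
    · subst hgg'
      exact (hΓ g hg).2.2 hcg hcg' hne
    · exact (h.2.2 hg hg' hgg').mono hM ha hcsub hcsub'

end IsSplitting

lemma isContour_iff {M a : ℝ} {γ : Finset ℤ} :
    IsContour M a γ ↔ γ.Nonempty ∧ Even γ.card ∧ ∀ P, IsSplitting M a γ P →
      (∀ g ∈ P, g.Nonempty ∧ Even g.card) → P.card ≤ 1 := by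
  refine and_congr_right' (and_congr_right' ⟨fun h P hP hparts => ?_, fun h hsplit => ?_⟩)
  · by_contra hcard
    exact h ⟨P, by omega, hparts, hP.1, hP.2.1, fun g hg g' hg' hne => hP.2.2 hg hg' hne⟩
  · obtain ⟨P, hcard, hparts, hdisj, hsup, hsep⟩ := hsplit
    have := h P ⟨hdisj, hsup, fun g hg g' hg' hne => hsep g hg g' hg' hne⟩ hparts
    omega

namespace IsContour

variable {M a : ℝ} {S γ : Finset ℤ} {Γ : Finset (Finset ℤ)}

lemma one_le_diamZ (h : IsContour M a γ) : 1 ≤ diamZ γ := by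
  obtain ⟨hne, ⟨k, hk⟩, -⟩ := h
  have := card_pos.mpr hne
  exact one_le_diamZ_of_one_lt_card (by omega)

lemma exists_superset_of_isSplitting (h : IsContour M a γ) (hΓ : IsSplitting M a S Γ)
    (hΓeven : ∀ t ∈ Γ, Even t.card) (hγS : γ ⊆ S) (hM : 0 ≤ M) (ha : 0 ≤ a)
    (hΓγ : ∀ t ∈ Γ, ∀ u ∈ Γ, t ≠ u → (t ∩ γ).Nonempty → (u ∩ γ).Nonempty →
      t ⊆ γ ∨ u ⊆ γ) :
    ∃ t ∈ Γ, γ ⊆ t := by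
  have hP : IsSplitting M a γ (trace Γ γ) := hΓ.restrict hγS hM ha
  have hparts : ∀ q ∈ trace Γ γ, q.Nonempty ∧ Even q.card := by
    intro q hq
    obtain ⟨t, ht, rfl, hqne⟩ := mem_trace.mp hq
    refine ⟨hqne, ?_⟩
    by_cases htγ : t ⊆ γ
    · rw [inter_eq_left.mpr htγ]
      exact hΓeven t ht
    refine hP.even_card_of_forall_ne h.2.1 hq fun q' hq' hne => ?_
    obtain ⟨u, hu, rfl, hq'ne⟩ := mem_trace.mp hq'
    have htu : t ≠ u := by rintro rfl; exact hne rfl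
    rw [inter_eq_left.mpr ((hΓγ t ht u hu htu hqne hq'ne).resolve_left htγ)]
    exact hΓeven u hu
  obtain ⟨x, hx⟩ := h.1
  obtain ⟨t, ht, hxt⟩ := hΓ.exists_mem (hγS hx)
  refine ⟨t, ht, fun y hy => ?_⟩
  obtain ⟨u, hu, hyu⟩ := hΓ.exists_mem (hγS hy)
  have hyuγ : y ∈ u ∩ γ := mem_inter.mpr ⟨hyu, hy⟩
  have hut : u ∩ γ = t ∩ γ :=
    card_le_one.mp ((isContour_iff.mp h).2.2 _ hP hparts) _
      (mem_trace.mpr ⟨u, hu, rfl, y, hyuγ⟩) _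
      (mem_trace.mpr ⟨t, ht, rfl, x, mem_inter.mpr ⟨hxt, hx⟩⟩)
  exact (mem_inter.mp (hut ▸ hyuγ)).1

end IsContour

lemma isPartition_iff {M a : ℝ} {S : Finset ℤ} {Γ : Finset (Finset ℤ)} :
    IsPartition M a S Γ ↔ (∀ g ∈ Γ, IsContour M a g) ∧ IsSplitting M a S Γ :=
  Iff.rfl

namespace IsPartition

variable {M a : ℝ} {S γ : Finset ℤ} {Γ Γ' : Finset (Finset ℤ)}

lemma isContour (h : IsPartition M a S Γ) (hγ : γ ∈ Γ) : IsContour M a γ :=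
  (isPartition_iff.mp h).1 γ hγ

lemma isSplitting (h : IsPartition M a S Γ) : IsSplitting M a S Γ :=
  (isPartition_iff.mp h).2

lemma exists_superset (hM : 1 ≤ M) (ha : 1 ≤ a) (hΓ : IsPartition M a S Γ)
    (hΓ' : IsPartition M a S Γ') (hγ : γ ∈ Γ) : ∃ γ' ∈ Γ', γ ⊆ γ' := by
  induction hn : (diamZ γ).toNat using Nat.strong_induction_on generalizing Γ Γ' γ with
  | _ n ih =>
  have hγ1 := (hΓ.isContour hγ).one_le_diamZ
  have small : ∀ t ∈ Γ', (t ∩ γ).Nonempty → diamZ t < diamZ γ → t ⊆ γ := by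
    rintro t ht ⟨x, hx⟩ hlt
    obtain ⟨δ, hδ, htδ⟩ := ih _ (by omega) hΓ' hΓ ht rfl
    rw [mem_inter] at hx
    obtain rfl := hΓ.isSplitting.eq_of_mem hδ hγ (htδ hx.1) hx.2
    exact htδ
  have big : ∀ t ∈ Γ', ∀ u ∈ Γ', (t ∩ γ).Nonempty → (u ∩ γ).Nonempty →
      diamZ γ ≤ diamZ t → diamZ γ ≤ diamZ u → t = u := by
    rintro t ht u hu ⟨x, hx⟩ ⟨y, hy⟩ hγt hγu
    rw [mem_inter] at hx hy
    by_contra htu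
    have hfar := (hΓ'.isSplitting.2.2 ht hu htu).min_diamZ_lt hM ha
      (hΓ'.isContour ht).one_le_diamZ (hΓ'.isContour hu).one_le_diamZ hx.1 hy.1
    have hnear := abs_sub_le_diamZ hx.2 hy.2
    omega
  refine (hΓ.isContour hγ).exists_superset_of_isSplitting hΓ'.isSplitting
    (fun t ht => (hΓ'.isContour ht).2.1) (hΓ.isSplitting.subset hγ) (by linarith) (by linarith)
    fun t ht u hu htu htγ huγ => ?_
  by_contra! hnot
  refine htu (big t ht u hu htγ huγ ?_ ?_)
  · exact not_lt.mp fun hlt => hnot.1 (small t ht htγ hlt)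
  · exact not_lt.mp fun hlt => hnot.2 (small u hu huγ hlt)

lemma subset (hM : 1 ≤ M) (ha : 1 ≤ a) (hΓ : IsPartition M a S Γ)
    (hΓ' : IsPartition M a S Γ') : Γ ⊆ Γ' := by
  intro γ hγ
  obtain ⟨γ', hγ', hγγ'⟩ := hΓ.exists_superset hM ha hΓ' hγ
  obtain ⟨γ'', hγ'', hγ'γ''⟩ := hΓ'.exists_superset hM ha hΓ hγ'
  obtain ⟨x, hx⟩ := (hΓ.isContour hγ).1
  obtain rfl := hΓ.isSplitting.eq_of_mem hγ'' hγ (hγ'γ'' (hγγ' hx)) hx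
  rwa [Finset.Subset.antisymm hγγ' hγ'γ'']

end IsPartition

theorem exists_isPartition {M a : ℝ} (hM : 0 ≤ M) (ha : 0 ≤ a) {S : Finset ℤ}
    (hS : Even S.card) : ∃ Γ, IsPartition M a S Γ := by
  induction S using strongInduction with
  | H S ih =>
  rcases S.eq_empty_or_nonempty with rfl | hne
  · exact ⟨∅, isPartition_iff.mpr ⟨by simp, IsSplitting.empty⟩⟩
  by_cases hc : IsContour M a S
  · exact ⟨{S}, isPartition_iff.mpr ⟨by simpa, IsSplitting.singleton⟩⟩
  obtain ⟨P, hP, hparts, hcard⟩ : ∃ P, IsSplitting M a S P ∧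
      (∀ g ∈ P, g.Nonempty ∧ Even g.card) ∧ 1 < P.card := by
    simpa [isContour_iff, hne, hS] using hc
  have hΓ : ∀ g ∈ P, ∃ Γ, IsPartition M a g Γ := fun g hg => by
    obtain ⟨g', hg', hne'⟩ := exists_mem_ne hcard g
    exact ih g (hP.ssubset hg hg' hne' (hparts g' hg').1) (hparts g hg).2
  choose! Γ hΓ using hΓ
  refine ⟨P.biUnion Γ, isPartition_iff.mpr ⟨fun c hc => ?_,
    hP.biUnion (fun g hg => (hΓ g hg).isSplitting) hM ha⟩⟩
  obtain ⟨g, hg, hcg⟩ := mem_biUnion.mp hc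
  exact (hΓ g hg).isContour hcg

theorem partition_exists_unique_general (M a : ℝ) (hM : 1 < M) (ha1 : 1 < a)
    (S : Finset ℤ) (hS : Even S.card) :
    ∃! Γ : Finset (Finset ℤ), IsPartition M a S Γ := by
  obtain ⟨Γ, hΓ⟩ := exists_isPartition (zero_lt_one.trans hM).le (zero_lt_one.trans ha1).le hS
  refine ⟨Γ, hΓ, fun Γ' hΓ' => ?_⟩
  exact (hΓ'.subset hM.le ha1.le hΓ).antisymm (hΓ.subset hM.le ha1.le hΓ')

/-- existence and uniqueness of the `(M,a)`-partition of any spin-flip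
collection. -/
theorem partition_exists_unique (M a : ℝ) (hM : 1 < M) (ha1 : 1 < a) (ha2 : a < 2)
    (S : Finset ℤ) (hS : Even S.card) :
    ∃! Γ : Finset (Finset ℤ), IsPartition M a S Γ :=
  partition_exists_unique_general M a hM ha1 S hS
end
end

section
/- Let Γ be a well-ordered finite family of pairwise disjoint spin-flip collections and let γ ∈ Γ be external. Then: (1) N(Γ) is the disjoint union of N(Γ∖Γ(γ)) and N(Γ(γ)); (2) N(Γ∖{γ}) is the disjoint union of N(Γ∖Γ(γ)), N(Γ₊(γ)) and N(Γ₋(γ)); (3) N(Γ(γ)) is the disjoint union of N(Γ₊(γ)) and I₋(γ)∖N(Γ₋(γ)). -/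
noncomputable section
open scoped Classical

/-! An integer `k : ℤ` encodes the dual-lattice site (spin flip) `k + 1/2 ∈ ℤ + 1/2`. -/

/-- The number of spin flips of `γ` lying strictly to the right of the integer site `x`
(i.e. flips `k + 1/2 > x`, that is `x ≤ k`). -/
def cntR (γ : Finset ℤ) (x : ℤ) : ℕ := (γ.filter fun k => x ≤ k).card

/-- The number of spin flips of `γ` lying strictly to the right of the dual site
`k' + 1/2`. -/
def cntRdual (γ : Finset ℤ) (k' : ℤ) : ℕ := (γ.filter fun k => k' < k).card

/-- The minus-interior `I₋(γ)`: the integers `x` such that the number of spin flips of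
`γ` to the right of `x` is odd. -/
def Iminus (γ : Finset ℤ) : Finset ℤ :=
  (Finset.Icc (γ.min.untopD 0) (γ.max.unbotD 0)).filter fun x => Odd (cntR γ x)

/-- The volume `V(γ) = [min γ, max γ] ∩ ℤ`. -/
def vol (γ : Finset ℤ) : Finset ℤ := Finset.Icc (γ.min.untopD 0 + 1) (γ.max.unbotD 0)

/-- `γ < γ'`: `γ` is contained in the open interval between two consecutive spin flips
of `γ'`. -/
def ltC (γ γ' : Finset ℤ) : Prop :=
  ∃ u ∈ γ', ∃ v ∈ γ', u < v ∧ (∀ w ∈ γ', ¬(u < w ∧ w < v)) ∧ ∀ x ∈ γ, u < x ∧ x < v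

/-- `Γ` is a well-ordered finite family of pairwise disjoint spin-flip collections:
members incomparable under `<` have disjoint volumes. -/
def WellOrdered (Γ : Finset (Finset ℤ)) : Prop :=
  (∀ g ∈ Γ, g.Nonempty ∧ Even g.card) ∧ (Γ : Set (Finset ℤ)).PairwiseDisjoint id ∧
    ∀ g ∈ Γ, ∀ g' ∈ Γ, g ≠ g' → ¬ltC g g' → ¬ltC g' g → Disjoint (vol g) (vol g')

/-- `N(Γ)`: the integers `x` such that the number of spin flips of `⋃Γ` to the right of
`x` is odd. -/
def NSet (Γ : Finset (Finset ℤ)) : Finset ℤ := Iminus (Γ.sup id)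

/-- `Γ(γ) = {γ' ∈ Γ : γ' = γ or γ' < γ}`. -/
def ΓOf (Γ : Finset (Finset ℤ)) (γ : Finset ℤ) : Finset (Finset ℤ) :=
  Γ.filter fun g => g = γ ∨ ltC g γ

/-- `Γ₋(γ) = {γ' ∈ Γ : γ' ⊂ I₋(γ)}`: members all of whose spin flips lie in the minus
region of `γ`. -/
def Γm (Γ : Finset (Finset ℤ)) (γ : Finset ℤ) : Finset (Finset ℤ) :=
  Γ.filter fun g => ∀ k ∈ g, Odd (cntRdual γ k)

/-- `Γ₊(γ) = {γ' ∈ Γ : γ' ⊂ I₊(γ)}`: members all of whose spin flips lie in the plus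
region of `γ` strictly inside its volume. -/
def Γp (Γ : Finset (Finset ℤ)) (γ : Finset ℤ) : Finset (Finset ℤ) :=
  Γ.filter fun g => ∀ k ∈ g,
    Even (cntRdual γ k) ∧ 0 < cntRdual γ k ∧ cntRdual γ k < γ.card

/-! For pairwise disjoint collections of even size the flip counts add up, so `N` of a disjoint
union of subfamilies is the symmetric difference of their `N`s. By well-orderedness the members
strictly below `γ` are exactly those of `Γ₊(γ) ∪ Γ₋(γ)`; each lies in a single gap of `γ`, on
which the flip count of `γ` is constant: odd for `Γ₋(γ)`, even and strictly between `0` and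
`|γ|` for `Γ₊(γ)`. Hence `N(Γ₋(γ)) ⊆ I₋(γ)` and `N(Γ₊(γ)) ⊆ V(γ) \ I₋(γ)`, while `N(Γ \ Γ(γ))`
avoids `V(γ)` because its members are incomparable with the external `γ`. These containments
turn every symmetric difference into the stated disjoint union. -/

open scoped symmDiff

section Counting

variable {γ s t : Finset ℤ} {x k : ℤ}

lemma cntRdual_eq_cntR_add_one : cntRdual γ k = cntR γ (k + 1) := by
  simp only [cntRdual, cntR, Int.add_one_le_iff]

lemma cntR_eq_cntRdual_of_notMem (hk : k ∉ γ) : cntR γ k = cntRdual γ k := by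
  unfold cntR cntRdual
  congr 1
  refine Finset.filter_congr fun w hw => ⟨fun hkw => lt_of_le_of_ne hkw ?_, le_of_lt⟩
  rintro rfl
  exact hk hw

lemma cntR_pos_iff : 0 < cntR γ x ↔ ∃ v ∈ γ, x ≤ v := by
  rw [cntR, Finset.card_pos, Finset.filter_nonempty_iff]

lemma cntR_lt_card_iff : cntR γ x < γ.card ↔ ∃ u ∈ γ, u < x := by
  rw [cntR, (Finset.card_filter_le _ _).lt_iff_ne, Ne, Finset.card_filter_eq_iff]
  push Not
  rfl

lemma cntR_union (h : Disjoint s t) : cntR (s ∪ t) x = cntR s x + cntR t x := by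
  rw [cntR, Finset.filter_union, Finset.card_union_of_disjoint
    (Finset.disjoint_filter_filter h)]
  rfl

lemma mem_vol_iff : x ∈ vol γ ↔ 0 < cntR γ x ∧ cntR γ x < γ.card := by
  rw [cntR_pos_iff, cntR_lt_card_iff]
  rcases γ.eq_empty_or_nonempty with rfl | hne
  · simp [vol]
  rw [vol, ← Finset.coe_min' hne, ← Finset.coe_max' hne, WithTop.untopD_coe,
    WithBot.unbotD_coe, Finset.mem_Icc, Int.add_one_le_iff, ← not_le, Finset.le_min'_iff,
    ← not_lt (a := γ.max' hne), Finset.max'_lt_iff]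
  push Not
  exact and_comm

lemma mem_vol_of_odd_cntR (hev : Even γ.card) (hx : Odd (cntR γ x)) : x ∈ vol γ := by
  have hle : cntR γ x ≤ γ.card := Finset.card_filter_le _ _
  have hne : cntR γ x ≠ γ.card := fun h => Nat.not_even_iff_odd.mpr hx (h ▸ hev)
  exact mem_vol_iff.mpr ⟨hx.pos, lt_of_le_of_ne hle hne⟩

lemma mem_Iminus_iff (hev : Even γ.card) : x ∈ Iminus γ ↔ Odd (cntR γ x) := by
  refine ⟨fun h => (Finset.mem_filter.mp h).2, fun hx => Finset.mem_filter.mpr ⟨?_, hx⟩⟩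
  have hvol := mem_vol_of_odd_cntR hev hx
  rw [vol, Finset.mem_Icc] at hvol
  exact Finset.mem_Icc.mpr ⟨by omega, hvol.2⟩

lemma Iminus_subset_vol (hev : Even γ.card) : Iminus γ ⊆ vol γ := fun _ hx =>
  mem_vol_of_odd_cntR hev ((mem_Iminus_iff hev).mp hx)

lemma Iminus_union (h : Disjoint s t) (hs : Even s.card) (ht : Even t.card) :
    Iminus (s ∪ t) = Iminus s ∆ Iminus t := by
  have hst : Even (s ∪ t).card := by
    rw [Finset.card_union_of_disjoint h]; exact hs.add ht
  ext x
  rw [Finset.mem_symmDiff, mem_Iminus_iff hst, mem_Iminus_iff hs, mem_Iminus_iff ht,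
    cntR_union h, Nat.odd_add, ← Nat.not_odd_iff_even]
  tauto

end Counting

lemma NSet_singleton (g : Finset ℤ) : NSet {g} = Iminus g := by
  rw [NSet, Finset.sup_singleton, id]

section Families

variable {Γ A B : Finset (Finset ℤ)} (hpd : (Γ : Set (Finset ℤ)).PairwiseDisjoint id)
  (hev : ∀ g ∈ Γ, Even g.card)
include hpd hev

lemma even_card_sup (hA : A ⊆ Γ) : Even (A.sup id).card := by
  rw [Finset.sup_eq_biUnion, Finset.card_biUnion (hpd.subset (Finset.coe_subset.mpr hA))]
  exact Finset.even_sum _ fun g hg => hev g (hA hg)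

omit hev in
lemma disjoint_sup_sup (hA : A ⊆ Γ) (hB : B ⊆ Γ) (hAB : Disjoint A B) :
    Disjoint (A.sup id) (B.sup id) := by
  refine Finset.disjoint_sup_left.mpr fun a ha => Finset.disjoint_sup_right.mpr fun b hb => ?_
  exact hpd (hA ha) (hB hb) fun hab => Finset.disjoint_left.mp hAB ha (hab ▸ hb)

lemma NSet_union (hA : A ⊆ Γ) (hB : B ⊆ Γ) (hAB : Disjoint A B) :
    NSet (A ∪ B) = NSet A ∆ NSet B := by
  rw [NSet, Finset.sup_union]
  exact Iminus_union (disjoint_sup_sup hpd hA hB hAB) (even_card_sup hpd hev hA)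
    (even_card_sup hpd hev hB)

lemma NSet_subset_biUnion (hA : A ⊆ Γ) : NSet A ⊆ A.biUnion Iminus := by
  induction A using Finset.induction_on with
  | empty => simp [NSet, Iminus, cntR]
  | insert g A hgA ih =>
    have hgΓ : {g} ⊆ Γ := Finset.singleton_subset_iff.mpr (hA (Finset.mem_insert_self g A))
    have hAΓ : A ⊆ Γ := (Finset.subset_insert g A).trans hA
    rw [Finset.biUnion_insert, Finset.insert_eq,
      NSet_union hpd hev hgΓ hAΓ (Finset.disjoint_singleton_left.mpr hgA)]
    exact symmDiff_le_sup.trans (sup_le_sup (NSet_singleton g).le (ih hAΓ))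

end Families

section Gaps

variable {g γ : Finset ℤ}

lemma cntR_eq_of_gap {u v x : ℤ} (hgap : ∀ w ∈ γ, ¬(u < w ∧ w < v)) (hux : u < x)
    (hxv : x ≤ v) : cntR γ x = cntR γ v := by
  unfold cntR
  congr 1
  refine Finset.filter_congr fun w hw => ⟨fun hxw => ?_, hxv.trans⟩
  by_contra hwv
  exact hgap w hw ⟨by omega, by omega⟩

lemma ltC.exists_cntR_eq (h : ltC g γ) : ∃ c, 0 < c ∧ c < γ.card ∧
    (∀ k ∈ g, cntRdual γ k = c) ∧ ∀ x ∈ vol g, cntR γ x = c := by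
  obtain ⟨u, hu, v, hv, huv, hgap, hg⟩ := h
  refine ⟨cntR γ v, cntR_pos_iff.mpr ⟨v, hv, le_rfl⟩, cntR_lt_card_iff.mpr ⟨u, hu, huv⟩,
    fun k hk => ?_, fun x hx => ?_⟩
  · have := hg k hk
    rw [cntRdual_eq_cntR_add_one]
    exact cntR_eq_of_gap hgap (by omega) (by omega)
  · obtain ⟨⟨b, hb, hxb⟩, ⟨a, ha, hax⟩⟩ := And.imp cntR_pos_iff.mp cntR_lt_card_iff.mp
      (mem_vol_iff.mp hx)
    exact cntR_eq_of_gap hgap ((hg a ha).1.trans hax) (hxb.trans (hg b hb).2.le)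

variable {Γ : Finset (Finset ℤ)}

lemma ltC.mem_Γm_or_mem_Γp (h : ltC g γ) (hg : g ∈ Γ) : g ∈ Γm Γ γ ∨ g ∈ Γp Γ γ := by
  obtain ⟨c, hc0, hcγ, hk, -⟩ := h.exists_cntR_eq
  rcases Nat.even_or_odd c with hc | hc
  · exact Or.inr (Finset.mem_filter.mpr ⟨hg, fun k hgk => hk k hgk ▸ ⟨hc, hc0, hcγ⟩⟩)
  · exact Or.inl (Finset.mem_filter.mpr ⟨hg, fun k hgk => hk k hgk ▸ hc⟩)

lemma ltC.Iminus_subset_of_mem_Γm (h : ltC g γ) (hg : g ∈ Γm Γ γ) (hev : Even g.card)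
    (hevγ : Even γ.card) : Iminus g ⊆ Iminus γ := by
  obtain ⟨c, -, -, hk, hx⟩ := h.exists_cntR_eq
  intro x hxg
  have hxv := Iminus_subset_vol hev hxg
  obtain ⟨b, hb, -⟩ := cntR_pos_iff.mp (mem_vol_iff.mp hxv).1
  rw [mem_Iminus_iff hevγ, hx x hxv, ← hk b hb]
  exact (Finset.mem_filter.mp hg).2 b hb

lemma ltC.Iminus_subset_of_mem_Γp (h : ltC g γ) (hg : g ∈ Γp Γ γ) (hev : Even g.card)
    (hevγ : Even γ.card) : Iminus g ⊆ vol γ \ Iminus γ := by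
  obtain ⟨c, hc0, hcγ, hk, hx⟩ := h.exists_cntR_eq
  intro x hxg
  have hxv := Iminus_subset_vol hev hxg
  obtain ⟨b, hb, -⟩ := cntR_pos_iff.mp (mem_vol_iff.mp hxv).1
  have hc : Even c := hk b hb ▸ ((Finset.mem_filter.mp hg).2 b hb).1
  rw [Finset.mem_sdiff, mem_vol_iff, mem_Iminus_iff hevγ, hx x hxv, Nat.not_odd_iff_even]
  exact ⟨⟨hc0, hcγ⟩, hc⟩

lemma Γp_subset : Γp Γ γ ⊆ Γ := Finset.filter_subset _ _

lemma Γm_subset : Γm Γ γ ⊆ Γ := Finset.filter_subset _ _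

lemma ΓOf_subset : ΓOf Γ γ ⊆ Γ := Finset.filter_subset _ _

lemma add_one_mem_vol_of_mem_Γm (hevγ : Even γ.card) (hg : g ∈ Γm Γ γ) :
    ∀ k ∈ g, k + 1 ∈ vol γ := fun k hk =>
  mem_vol_of_odd_cntR hevγ (cntRdual_eq_cntR_add_one ▸ (Finset.mem_filter.mp hg).2 k hk)

lemma add_one_mem_vol_of_mem_Γp (hg : g ∈ Γp Γ γ) : ∀ k ∈ g, k + 1 ∈ vol γ := fun k hk =>
  mem_vol_iff.mpr (cntRdual_eq_cntR_add_one ▸ ((Finset.mem_filter.mp hg).2 k hk).2)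

lemma disjoint_Γp_Γm (hne : ∀ g ∈ Γ, g.Nonempty) : Disjoint (Γp Γ γ) (Γm Γ γ) := by
  refine Finset.disjoint_left.mpr fun g hp hm => ?_
  obtain ⟨hgΓ, hpk⟩ := Finset.mem_filter.mp hp
  obtain ⟨k, hk⟩ := hne g hgΓ
  exact Nat.not_even_iff_odd.mpr ((Finset.mem_filter.mp hm).2 k hk) (hpk k hk).1

end Gaps

namespace WellOrdered

variable {Γ : Finset (Finset ℤ)} {g γ : Finset ℤ} (hwo : WellOrdered Γ) (hγ : γ ∈ Γ)

include hwo

lemma pairwiseDisjoint : (Γ : Set (Finset ℤ)).PairwiseDisjoint id := hwo.2.1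

lemma nonempty : ∀ g ∈ Γ, g.Nonempty := fun g hg => (hwo.1 g hg).1

lemma even_card : ∀ g ∈ Γ, Even g.card := fun g hg => (hwo.1 g hg).2

include hγ

lemma ne_and_ltC (hg : g ∈ Γ) (hvol : ∀ k ∈ g, k + 1 ∈ vol γ) : g ≠ γ ∧ ltC g γ := by
  have hne := hwo.nonempty g hg
  set m := g.max' hne
  have hm := hvol m (g.max'_mem hne)
  have hgγ : g ≠ γ := by
    rintro rfl
    obtain ⟨v, hv, hmv⟩ := cntR_pos_iff.mp (mem_vol_iff.mp hm).1
    have := g.le_max' v hv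
    omega
  refine ⟨hgγ, ?_⟩
  by_contra hlt
  have hnlt : ¬ltC γ g := by
    rintro ⟨u, hu, _, _, _, _, hγu⟩
    obtain ⟨w, hw, hwu⟩ := cntR_lt_card_iff.mp (mem_vol_iff.mp (hvol u hu)).2
    have := (hγu w hw).1
    omega
  have hcard : 1 < g.card := by
    obtain ⟨n, hn⟩ := hwo.even_card g hg
    have := hne.card_pos
    omega
  have hm_vol_g : m ∈ vol g := mem_vol_iff.mpr ⟨cntR_pos_iff.mpr ⟨m, g.max'_mem hne, le_rfl⟩,
    cntR_lt_card_iff.mpr ⟨g.min' hne, g.min'_mem hne, g.min'_lt_max'_of_card hcard⟩⟩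
  have hmγ : m ∉ γ := Finset.disjoint_left.mp (hwo.pairwiseDisjoint hg hγ hgγ) (g.max'_mem hne)
  have hm_vol_γ : m ∈ vol γ := by
    rw [mem_vol_iff, cntR_eq_cntRdual_of_notMem hmγ, cntRdual_eq_cntR_add_one]
    exact mem_vol_iff.mp hm
  exact Finset.disjoint_left.mp (hwo.2.2 g hg γ hγ hgγ hlt hnlt) hm_vol_g hm_vol_γ

lemma mem_Γp_union_Γm_iff :
    g ∈ Γp Γ γ ∪ Γm Γ γ ↔ g ∈ Γ ∧ g ≠ γ ∧ ltC g γ := by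
  refine ⟨fun h => ?_, fun ⟨hg, _, hlt⟩ => Finset.mem_union.mpr (hlt.mem_Γm_or_mem_Γp hg).symm⟩
  rcases Finset.mem_union.mp h with hp | hm
  · exact ⟨Γp_subset hp, hwo.ne_and_ltC hγ (Γp_subset hp) (add_one_mem_vol_of_mem_Γp hp)⟩
  · exact ⟨Γm_subset hm,
      hwo.ne_and_ltC hγ (Γm_subset hm) (add_one_mem_vol_of_mem_Γm (hwo.even_card γ hγ) hm)⟩

lemma ΓOf_eq : ΓOf Γ γ = insert γ (Γp Γ γ ∪ Γm Γ γ) := by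
  ext g
  rw [Finset.mem_insert, hwo.mem_Γp_union_Γm_iff hγ, ΓOf, Finset.mem_filter]
  rcases eq_or_ne g γ with rfl | hgγ <;> tauto

lemma erase_eq : Γ.erase γ = (Γ \ ΓOf Γ γ) ∪ (Γp Γ γ ∪ Γm Γ γ) := by
  ext g
  rw [Finset.mem_union, hwo.mem_Γp_union_Γm_iff hγ, Finset.mem_erase, Finset.mem_sdiff, ΓOf,
    Finset.mem_filter]
  tauto

lemma NSet_Γm_subset_Iminus : NSet (Γm Γ γ) ⊆ Iminus γ := by
  refine (NSet_subset_biUnion hwo.pairwiseDisjoint hwo.even_card Γm_subset).trans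
    (Finset.biUnion_subset.mpr fun g hg => ?_)
  obtain ⟨hgΓ, -, hlt⟩ := (hwo.mem_Γp_union_Γm_iff hγ).mp (Finset.mem_union_right _ hg)
  exact hlt.Iminus_subset_of_mem_Γm hg (hwo.even_card g hgΓ) (hwo.even_card γ hγ)

lemma NSet_Γp_subset_vol_sdiff_Iminus : NSet (Γp Γ γ) ⊆ vol γ \ Iminus γ := by
  refine (NSet_subset_biUnion hwo.pairwiseDisjoint hwo.even_card Γp_subset).trans
    (Finset.biUnion_subset.mpr fun g hg => ?_)
  obtain ⟨hgΓ, -, hlt⟩ := (hwo.mem_Γp_union_Γm_iff hγ).mp (Finset.mem_union_left _ hg)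
  exact hlt.Iminus_subset_of_mem_Γp hg (hwo.even_card g hgΓ) (hwo.even_card γ hγ)

lemma disjoint_NSet_Γp_Iminus : Disjoint (NSet (Γp Γ γ)) (Iminus γ) :=
  Finset.sdiff_disjoint.mono_left (hwo.NSet_Γp_subset_vol_sdiff_Iminus hγ)

lemma NSet_ΓOf_eq : NSet (ΓOf Γ γ) = NSet (Γp Γ γ) ∪ (Iminus γ \ NSet (Γm Γ γ)) := by
  have hγPM : Disjoint {γ} (Γp Γ γ ∪ Γm Γ γ) := Finset.disjoint_singleton_left.mpr
    fun h => ((hwo.mem_Γp_union_Γm_iff hγ).mp h).2.1 rfl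
  rw [hwo.ΓOf_eq hγ, Finset.insert_eq,
    NSet_union hwo.pairwiseDisjoint hwo.even_card (Finset.singleton_subset_iff.mpr hγ)
      (Finset.union_subset Γp_subset Γm_subset) hγPM,
    NSet_union hwo.pairwiseDisjoint hwo.even_card Γp_subset Γm_subset
      (disjoint_Γp_Γm hwo.nonempty),
    NSet_singleton, symmDiff_left_comm, symmDiff_of_ge (hwo.NSet_Γm_subset_Iminus hγ),
    ((hwo.disjoint_NSet_Γp_Iminus hγ).mono_right Finset.sdiff_subset).symmDiff_eq_sup]
  rfl

lemma disjoint_NSet_sdiff_ΓOf_vol (hext : ∀ γ' ∈ Γ, ¬ltC γ γ') :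
    Disjoint (NSet (Γ \ ΓOf Γ γ)) (vol γ) := by
  refine Disjoint.mono_left (NSet_subset_biUnion hwo.pairwiseDisjoint hwo.even_card
    Finset.sdiff_subset) ((Finset.disjoint_biUnion_left _ _ _).mpr fun g hg => ?_)
  obtain ⟨hgΓ, hgO⟩ := Finset.mem_sdiff.mp hg
  have hg' : ¬(g = γ ∨ ltC g γ) := fun h => hgO (Finset.mem_filter.mpr ⟨hgΓ, h⟩)
  push Not at hg'
  exact (hwo.2.2 g hgΓ γ hγ hg'.1 hg'.2 (hext g hgΓ)).mono_left
    (Iminus_subset_vol (hwo.even_card g hgΓ))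

lemma NSet_ΓOf_subset_vol : NSet (ΓOf Γ γ) ⊆ vol γ := by
  rw [hwo.NSet_ΓOf_eq hγ]
  exact Finset.union_subset ((hwo.NSet_Γp_subset_vol_sdiff_Iminus hγ).trans Finset.sdiff_subset)
    (Finset.sdiff_subset.trans (Iminus_subset_vol (hwo.even_card γ hγ)))

variable (hext : ∀ γ' ∈ Γ, ¬ltC γ γ')
include hext

lemma NSet_eq_union :
    NSet Γ = NSet (Γ \ ΓOf Γ γ) ∪ NSet (ΓOf Γ γ) ∧
      Disjoint (NSet (Γ \ ΓOf Γ γ)) (NSet (ΓOf Γ γ)) := by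
  have hdisj := (hwo.disjoint_NSet_sdiff_ΓOf_vol hγ hext).mono_right (hwo.NSet_ΓOf_subset_vol hγ)
  refine ⟨?_, hdisj⟩
  conv_lhs => rw [← Finset.sdiff_union_of_subset (ΓOf_subset (Γ := Γ) (γ := γ))]
  rw [NSet_union hwo.pairwiseDisjoint hwo.even_card Finset.sdiff_subset ΓOf_subset
    Finset.sdiff_disjoint, hdisj.symmDiff_eq_sup]
  rfl

lemma NSet_erase_eq :
    NSet (Γ.erase γ) = NSet (Γ \ ΓOf Γ γ) ∪ NSet (Γp Γ γ) ∪ NSet (Γm Γ γ) ∧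
      Disjoint (NSet (Γ \ ΓOf Γ γ)) (NSet (Γp Γ γ)) ∧
      Disjoint (NSet (Γ \ ΓOf Γ γ)) (NSet (Γm Γ γ)) ∧
      Disjoint (NSet (Γp Γ γ)) (NSet (Γm Γ γ)) := by
  have hAvol := hwo.disjoint_NSet_sdiff_ΓOf_vol hγ hext
  have hAP := hAvol.mono_right
    ((hwo.NSet_Γp_subset_vol_sdiff_Iminus hγ).trans Finset.sdiff_subset)
  have hAM := hAvol.mono_right
    ((hwo.NSet_Γm_subset_Iminus hγ).trans (Iminus_subset_vol (hwo.even_card γ hγ)))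
  have hPM := (hwo.disjoint_NSet_Γp_Iminus hγ).mono_right (hwo.NSet_Γm_subset_Iminus hγ)
  have hfam : Disjoint (Γ \ ΓOf Γ γ) (Γp Γ γ ∪ Γm Γ γ) := Finset.sdiff_disjoint.mono_right
    (hwo.ΓOf_eq hγ ▸ Finset.subset_insert _ _)
  refine ⟨?_, hAP, hAM, hPM⟩
  rw [hwo.erase_eq hγ,
    NSet_union hwo.pairwiseDisjoint hwo.even_card Finset.sdiff_subset
      (Finset.union_subset Γp_subset Γm_subset) hfam,
    NSet_union hwo.pairwiseDisjoint hwo.even_card Γp_subset Γm_subset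
      (disjoint_Γp_Γm hwo.nonempty),
    hPM.symmDiff_eq_sup, (disjoint_sup_right.mpr ⟨hAP, hAM⟩).symmDiff_eq_sup, ← sup_assoc]
  rfl

end WellOrdered

/-- Lemma `posneg`: decompositions of the minus region of a well-ordered
family after removing an external member `γ`. -/
theorem minus_region_decomposition (Γ : Finset (Finset ℤ)) (hwo : WellOrdered Γ)
    (γ : Finset ℤ) (hγ : γ ∈ Γ) (hext : ∀ γ' ∈ Γ, ¬ltC γ γ') :
    (NSet Γ = NSet (Γ \ ΓOf Γ γ) ∪ NSet (ΓOf Γ γ) ∧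
      Disjoint (NSet (Γ \ ΓOf Γ γ)) (NSet (ΓOf Γ γ))) ∧
    (NSet (Γ.erase γ) = NSet (Γ \ ΓOf Γ γ) ∪ NSet (Γp Γ γ) ∪ NSet (Γm Γ γ) ∧
      Disjoint (NSet (Γ \ ΓOf Γ γ)) (NSet (Γp Γ γ)) ∧
      Disjoint (NSet (Γ \ ΓOf Γ γ)) (NSet (Γm Γ γ)) ∧
      Disjoint (NSet (Γp Γ γ)) (NSet (Γm Γ γ))) ∧
    (NSet (ΓOf Γ γ) = NSet (Γp Γ γ) ∪ (Iminus γ \ NSet (Γm Γ γ)) ∧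
      Disjoint (NSet (Γp Γ γ)) (Iminus γ \ NSet (Γm Γ γ))) := by
  refine ⟨hwo.NSet_eq_union hγ hext, hwo.NSet_erase_eq hγ hext, hwo.NSet_ΓOf_eq hγ, ?_⟩
  exact (hwo.disjoint_NSet_Γp_Iminus hγ).mono_right Finset.sdiff_subset
end
end

section
/- Let M > 1 and 1 < a < 2, let γ be a spin-flip collection, let 1 ≤ n, m ≤ n₀(γ), and let I ∈ 𝒾'ₙ(γ) and I' ∈ 𝒾'ₘ(γ) with I ≠ I'. Then the sets (I₋ × I₊) ∪ (I₊ × I₋) and (I'₋ × I'₊) ∪ (I'₊ × I'₋) are disjoint. -/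
noncomputable section
open scoped Classical

/-! An integer `k : ℤ` encodes the dual-lattice site (spin flip) `k + 1/2 ∈ ℤ + 1/2`. -/

/-- Auxiliary greedy construction of the canonical cover (with fuel). -/
def coverAux (n : ℕ) : ℕ → Finset ℤ → Finset ℤ
  | 0, _ => ∅
  | fuel + 1, γ =>
    if h : γ.Nonempty then
      insert (γ.min' h) (coverAux n fuel (γ.filter fun x => γ.min' h + 2 ^ n ≤ x))
    else ∅

/-- The left endpoints of the intervals of the canonical greedy cover `𝒾ₙ(γ)` of `γ` by
open intervals of diameter `2^n` with integer endpoints: `u` encodes `(u, u + 2^n)`. -/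
def cover (n : ℕ) (γ : Finset ℤ) : Finset ℤ := coverAux n γ.card γ

/-- `n₀(γ) = ⌊log₂ diam γ⌋`. -/
def n0 (γ : Finset ℤ) : ℕ := Nat.log 2 (diamZ γ).toNat

/-- The isolated intervals `𝒾'ₙ(γ)`: intervals of `𝒾ₙ(γ)` at distance `≥ 2M·2^{an}` from
every other interval of `𝒾ₙ(γ)` (the distance between the intervals encoded by `u ≠ u'`
being `|u − u'| − 2^n`). -/
def isoCover (M a : ℝ) (n : ℕ) (γ : Finset ℤ) : Finset ℤ :=
  (cover n γ).filter fun u => ∀ u' ∈ cover n γ, u' ≠ u →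
    2 * M * (2 : ℝ) ^ (a * n) ≤ |(u : ℝ) - (u' : ℝ)| - 2 ^ n

/-- For `I = (u, u + 2^n)`, the flank `I₋ = [u − 2^{n−1} + 1, u] ∩ ℤ`. -/
def sideL (n : ℕ) (u : ℤ) : Finset ℤ := Finset.Icc (u - 2 ^ (n - 1) + 1) u

/-- For `I = (u, v) = (u, u + 2^n)`, the flank `I₊ = [v, v + 2^{n−1} − 1] ∩ ℤ`. -/
def sideR (n : ℕ) (u : ℤ) : Finset ℤ := Finset.Icc (u + 2 ^ n) (u + 2 ^ n + 2 ^ (n - 1) - 1)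

/-! A pair `(x, y) ∈ I₋ × I₊` of an interval `I` of length `2^n` has `2^n ≤ y - x < 2^(n+1)`,
so it determines the scale `n`. Two intervals of the same scale whose left flanks share a point
have left endpoints less than `2^n` apart, which isolation forbids. Pairs in `I₋ × I₊` and in
`I'₊ × I'₋` are told apart by the sign of `y - x`. -/

section Flanks

variable {n m : ℕ} {u u' x y : ℤ}

-- The `+ 1` is needed at `n = 0`, where the truncated `n - 1` makes `2 ^ (n - 1) = 1`.
lemma two_pow_pred_mul_two_le (n : ℕ) : (2 : ℤ) ^ (n - 1) * 2 ≤ 2 ^ n + 1 := by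
  cases n with
  | zero => norm_num
  | succ k => rw [Nat.add_sub_cancel, ← pow_succ]; omega

lemma lt_of_mem_sideL_of_mem_sideR (hx : x ∈ sideL n u) (hy : y ∈ sideR n u) : x < y := by
  simp only [sideL, sideR, Finset.mem_Icc] at hx hy
  linarith [pow_pos (two_pos : (0 : ℤ) < 2) n]

lemma sub_mem_Ico_of_mem_sideL_of_mem_sideR (hx : x ∈ sideL n u) (hy : y ∈ sideR n u) :
    y - x ∈ Set.Ico (2 ^ n) (2 ^ (n + 1)) := by
  simp only [sideL, sideR, Finset.mem_Icc] at hx hy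
  rw [Set.mem_Ico]
  have := two_pow_pred_mul_two_le n
  constructor <;> linarith [pow_succ (2 : ℤ) n]

lemma eq_of_mem_sideL_of_mem_sideR (hx : x ∈ sideL n u) (hy : y ∈ sideR n u)
    (hx' : x ∈ sideL m u') (hy' : y ∈ sideR m u') : n = m := by
  obtain ⟨hn, hn'⟩ := sub_mem_Ico_of_mem_sideL_of_mem_sideR hx hy
  obtain ⟨hm, hm'⟩ := sub_mem_Ico_of_mem_sideL_of_mem_sideR hx' hy'
  have h₁ : n < m + 1 := (pow_lt_pow_iff_right₀ one_lt_two).1 (hn.trans_lt hm')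
  have h₂ : m < n + 1 := (pow_lt_pow_iff_right₀ one_lt_two).1 (hm.trans_lt hn')
  omega

lemma abs_sub_lt_of_mem_sideL (hx : x ∈ sideL n u) (hx' : x ∈ sideL n u') :
    |u - u'| < 2 ^ n := by
  simp only [sideL, Finset.mem_Icc] at hx hx'
  have : (2 : ℤ) ^ (n - 1) ≤ 2 ^ n := pow_le_pow_right₀ one_le_two (Nat.sub_le n 1)
  rw [abs_sub_lt_iff]
  constructor <;> linarith

end Flanks

lemma two_pow_lt_abs_sub_of_mem_isoCover {M a : ℝ} {n : ℕ} {γ : Finset ℤ} {u u' : ℤ}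
    (hM : 0 < M) (hu : u ∈ isoCover M a n γ) (hu' : u' ∈ cover n γ) (hne : u' ≠ u) :
    (2 : ℤ) ^ n < |u - u'| := by
  have hiso := (Finset.mem_filter.1 hu).2 u' hu' hne
  have : (0 : ℝ) < 2 * M * 2 ^ (a * n) := by positivity
  exact_mod_cast (by linarith : (2 : ℝ) ^ n < |(u : ℝ) - u'|)

lemma eq_of_mem_isoCover_of_mem_sideL_of_mem_sideR {M a : ℝ} {γ : Finset ℤ} {n m : ℕ}
    {u u' x y : ℤ} (hM : 0 < M) (hu : u ∈ isoCover M a n γ) (hu' : u' ∈ isoCover M a m γ)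
    (hx : x ∈ sideL n u) (hy : y ∈ sideR n u) (hx' : x ∈ sideL m u') (hy' : y ∈ sideR m u') :
    u = u' ∧ n = m := by
  obtain rfl := eq_of_mem_sideL_of_mem_sideR hx hy hx' hy'
  refine ⟨?_, rfl⟩
  by_contra hne
  have hfar := two_pow_lt_abs_sub_of_mem_isoCover hM hu (Finset.mem_of_mem_filter _ hu')
    (Ne.symm hne)
  exact (abs_sub_lt_of_mem_sideL hx hx').not_gt hfar

theorem isolated_pairs_disjoint_general (M a : ℝ) (hM : 1 < M) (γ : Finset ℤ) (n m : ℕ)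
    (u u' : ℤ) (hu : u ∈ isoCover M a n γ) (hu' : u' ∈ isoCover M a m γ)
    (hne' : ¬(u = u' ∧ n = m)) :
    Disjoint ((sideL n u ×ˢ sideR n u) ∪ (sideR n u ×ˢ sideL n u))
      ((sideL m u' ×ˢ sideR m u') ∪ (sideR m u' ×ˢ sideL m u')) := by
  have hM₀ : 0 < M := one_pos.trans hM
  rw [Finset.disjoint_left]
  rintro ⟨x, y⟩ hp hp'
  simp only [Finset.mem_union, Finset.mem_product] at hp hp'
  rcases hp with ⟨hxL, hyR⟩ | ⟨hxR, hyL⟩ <;>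
    rcases hp' with ⟨hxL', hyR'⟩ | ⟨hxR', hyL'⟩
  · exact hne' (eq_of_mem_isoCover_of_mem_sideL_of_mem_sideR hM₀ hu hu' hxL hyR hxL' hyR')
  · exact (lt_of_mem_sideL_of_mem_sideR hxL hyR).not_gt (lt_of_mem_sideL_of_mem_sideR hyL' hxR')
  · exact (lt_of_mem_sideL_of_mem_sideR hyL hxR).not_gt (lt_of_mem_sideL_of_mem_sideR hxL' hyR')
  · exact hne' (eq_of_mem_isoCover_of_mem_sideL_of_mem_sideR hM₀ hu hu' hyL hxR hyL' hxR')

/-- Lemma `intervalospnc`: distinct isolated intervals have disjoint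
associated pair sets `(I₋ × I₊) ∪ (I₊ × I₋)`. -/
theorem isolated_pairs_disjoint (M a : ℝ) (hM : 1 < M) (ha1 : 1 < a) (ha2 : a < 2)
    (γ : Finset ℤ) (hne : γ.Nonempty) (heven : Even γ.card)
    (n m : ℕ) (hn1 : 1 ≤ n) (hn2 : n ≤ n0 γ) (hm1 : 1 ≤ m) (hm2 : m ≤ n0 γ)
    (u u' : ℤ) (hu : u ∈ isoCover M a n γ) (hu' : u' ∈ isoCover M a m γ)
    (hne' : ¬(u = u' ∧ n = m)) :
    Disjoint ((sideL n u ×ˢ sideR n u) ∪ (sideR n u ×ˢ sideL n u))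
      ((sideL m u' ×ˢ sideR m u') ∪ (sideR m u' ×ˢ sideL m u')) :=
  isolated_pairs_disjoint_general M a hM γ n m u u' hu hu' hne'
end
end
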